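/- Let n ≥ 4 and let a, b ∈ A_n be nonzero pure elements. Then (a,a,b) = 0 and (a,b,b) = 0 hold simultaneously if and only if the set {a, b, a·b} is a normed subset of A_n, i.e. ‖x·y‖ = ‖x‖·‖y‖ for all x, y ∈ {a, b, a·b}. -/

import Mathlib

noncomputable section

open scoped Quaternion

/-- The Cayley–Dickson algebra `A n = ℝ^(2^n)` as a type. -/
def CD : ℕ → Type
  | 0 => ℝ
  | n + 1 => CD n × CD n

namespace CD

instance instAddCommGroup : (n : ℕ) → AddCommGroup (CD n)
  | 0 => inferInstanceAs (AddCommGroup ℝ)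
  | n + 1 =>
    letI := instAddCommGroup n
    inferInstanceAs (AddCommGroup (CD n × CD n))

instance instModule : (n : ℕ) → Module ℝ (CD n)
  | 0 => inferInstanceAs (Module ℝ ℝ)
  | n + 1 =>
    letI := instModule n
    inferInstanceAs (Module ℝ (CD n × CD n))

/-- Conjugation in the Cayley–Dickson algebra. -/
def conj : {n : ℕ} → CD n → CD n
  | 0, x => x
  | _ + 1, x => (conj x.1, -x.2)

/-- Cayley–Dickson multiplication. -/
def mul : {n : ℕ} → CD n → CD n → CD n
  | 0, x, y => Mul.mul (α := ℝ) x y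
  | _ + 1, x, y =>
    (mul x.1 y.1 - mul (conj y.2) x.2, mul y.2 x.1 + mul x.2 (conj y.1))

instance instMul (n : ℕ) : Mul (CD n) := ⟨mul⟩

/-- The multiplicative unit `e₀`. -/
def one : {n : ℕ} → CD n
  | 0 => (1 : ℝ)
  | _ + 1 => (one, 0)

instance instOne (n : ℕ) : One (CD n) := ⟨one⟩

/-- The Euclidean inner product on `A n = ℝ^(2^n)`. -/
def inner : {n : ℕ} → CD n → CD n → ℝ
  | 0, x, y => (x * y : ℝ)
  | _ + 1, x, y => inner x.1 y.1 + inner x.2 y.2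

/-- The Euclidean norm on `A n = ℝ^(2^n)`. -/
def norm {n : ℕ} (x : CD n) : ℝ := Real.sqrt (inner x x)

/-- `ã = (-a₂, a₁)`. -/
def tilde {n : ℕ} (a : CD (n + 1)) : CD (n + 1) := (-a.2, a.1)

/-- `ẽ₀ = (0, e₀)`. -/
def etilde (n : ℕ) : CD (n + 1) := ((0 : CD n), (1 : CD n))

/-- An element is pure if its conjugate is its negative. -/
def IsPure {n : ℕ} (a : CD n) : Prop := conj a = -a

/-- An element of `A (n+1)` is doubly pure if both of its coordinates are pure. -/
def IsDoublyPure {n : ℕ} (a : CD (n + 1)) : Prop := IsPure a.1 ∧ IsPure a.2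

/-- The associator `(a,b,c) = (ab)c - a(bc)`. -/
def assoc {n : ℕ} (a b c : CD n) : CD n := a * b * c - a * (b * c)

/-- An element is alternative if `(a,a,x) = 0` for all `x`. -/
def IsAlternative {n : ℕ} (a : CD n) : Prop := ∀ x : CD n, assoc a a x = 0

/-- An element is strongly alternative if `(a,a,x) = 0` and `(a,x,x) = 0` for all `x`. -/
def IsStronglyAlternative {n : ℕ} (a : CD n) : Prop :=
  (∀ x : CD n, assoc a a x = 0) ∧ (∀ x : CD n, assoc a x x = 0)

/-- The pure (imaginary) part of an element. -/
def im {n : ℕ} (a : CD n) : CD n := (2⁻¹ : ℝ) • (a - conj a)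

/-- `H a`, the span of `{e₀, ã, a, ẽ₀}`. -/
def H {n : ℕ} (a : CD (n + 1)) : Submodule ℝ (CD (n + 1)) :=
  Submodule.span ℝ {(1 : CD (n + 1)), tilde a, a, etilde n}

/-- The orthogonal complement of `H a`. -/
def Hperp {n : ℕ} (a : CD (n + 1)) : Set (CD (n + 1)) :=
  {x | ∀ y ∈ H a, inner y x = 0}

/-!
For pure `a` we have `a² = -‖a‖²`, so `(a,a,b) = 0` says `a(ab) = -‖a‖² b`. Since
`⟨a(ab), b⟩ = -‖ab‖²` for every `b`, the equality case of Cauchy–Schwarz makes this identity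
equivalent to the pair `‖ab‖ = ‖a‖‖b‖`, `‖a(ab)‖ = ‖a‖‖ab‖`; symmetrically `(a,b,b) = 0` is
equivalent to `‖ab‖ = ‖a‖‖b‖`, `‖(ab)b‖ = ‖ab‖‖b‖`. The other products in `{a, b, ab}` are then
normed automatically: `‖x²‖ = ‖x‖²` for every `x`, `ba = conj(ab)`, and by `ab + ba = -2⟨a,b⟩`
the product `(ab)a` has the norm of `a(ba) = ‖a‖² b - 2⟨a,b⟩ a`, a reflection of `b` scaled by
`‖a‖²`; likewise for `b(ab)`.
-/

section

variable {n : ℕ}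

@[ext] lemma ext {x y : CD (n + 1)} (h₁ : x.1 = y.1) (h₂ : x.2 = y.2) : x = y :=
  Prod.ext h₁ h₂

@[simp] lemma fst_add (x y : CD (n + 1)) : (x + y).1 = x.1 + y.1 := rfl
@[simp] lemma snd_add (x y : CD (n + 1)) : (x + y).2 = x.2 + y.2 := rfl
@[simp] lemma fst_smul (r : ℝ) (x : CD (n + 1)) : (r • x).1 = r • x.1 := rfl
@[simp] lemma snd_smul (r : ℝ) (x : CD (n + 1)) : (r • x).2 = r • x.2 := rfl
@[simp] lemma fst_one : (1 : CD (n + 1)).1 = 1 := rfl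
@[simp] lemma snd_one : (1 : CD (n + 1)).2 = 0 := rfl
@[simp] lemma fst_conj (x : CD (n + 1)) : (conj x).1 = conj x.1 := rfl
@[simp] lemma snd_conj (x : CD (n + 1)) : (conj x).2 = -x.2 := rfl
@[simp] lemma fst_mul (x y : CD (n + 1)) : (x * y).1 = x.1 * y.1 - conj y.2 * x.2 := rfl
@[simp] lemma snd_mul (x y : CD (n + 1)) : (x * y).2 = y.2 * x.1 + x.2 * conj y.1 := rfl
@[simp] lemma inner_succ (x y : CD (n + 1)) : inner x y = inner x.1 y.1 + inner x.2 y.2 := rfl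

@[simp] theorem conj_add (x y : CD n) : conj (x + y) = conj x + conj y := by
  induction n with
  | zero => rfl
  | succ n ih => ext <;> simp [ih, add_comm]

@[simp] theorem conj_smul (r : ℝ) (x : CD n) : conj (r • x) = r • conj x := by
  induction n with
  | zero => rfl
  | succ n ih => ext <;> simp [ih]

@[simp] theorem conj_conj (x : CD n) : conj (conj x) = x := by
  induction n with
  | zero => rfl
  | succ n ih => ext <;> simp [ih]

@[simp] lemma conj_neg (x : CD n) : conj (-x) = -conj x := by
  rw [← neg_one_smul ℝ x, conj_smul, neg_one_smul]

@[simp] lemma conj_sub (x y : CD n) : conj (x - y) = conj x - conj y := by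
  simp [sub_eq_add_neg]

@[simp] lemma conj_zero : conj (0 : CD n) = 0 := by
  simpa using conj_smul 0 (0 : CD n)

@[simp] theorem conj_one : conj (1 : CD n) = 1 := by
  induction n with
  | zero => rfl
  | succ n ih => ext <;> simp [ih]

theorem mul_add_and_add_mul (n : ℕ) :
    (∀ x y z : CD n, x * (y + z) = x * y + x * z) ∧
      ∀ x y z : CD n, (x + y) * z = x * z + y * z := by
  induction n with
  | zero =>
    exact ⟨fun x y z => mul_add (show ℝ from x) y z, fun x y z => add_mul (show ℝ from x) y z⟩
  | succ n ih =>
    constructor <;> intros <;> ext <;>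
      simp only [fst_mul, snd_mul, fst_add, snd_add, conj_add, ih.1, ih.2] <;> abel

abbrev nonUnitalNonAssocRing : NonUnitalNonAssocRing (CD n) where
  left_distrib := (mul_add_and_add_mul n).1
  right_distrib := (mul_add_and_add_mul n).2
  zero_mul x := by simpa using (mul_add_and_add_mul n).2 0 0 x
  mul_zero x := by simpa using (mul_add_and_add_mul n).1 x 0 0

-- Only local: as global instances these would change how `0 : CD n` elaborates in the theorem.
attribute [local instance] nonUnitalNonAssocRing

theorem one_mul_and_mul_one (n : ℕ) : ∀ x : CD n, 1 * x = x ∧ x * 1 = x := by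
  induction n with
  | zero => exact fun x => ⟨one_mul (show ℝ from x), mul_one (show ℝ from x)⟩
  | succ n ih => intro x; constructor <;> ext <;> simp [(ih _).1, (ih _).2]

abbrev nonAssocRing : NonAssocRing (CD n) where
  one_mul x := (one_mul_and_mul_one n x).1
  mul_one x := (one_mul_and_mul_one n x).2

attribute [local instance] nonAssocRing

theorem smul_mul_and_mul_smul (n : ℕ) :
    ∀ (r : ℝ) (x y : CD n), (r • x) * y = r • (x * y) ∧ x * (r • y) = r • (x * y) := by
  induction n with
  | zero => exact fun r x y => ⟨mul_assoc r (show ℝ from x) y, mul_left_comm (show ℝ from x) r y⟩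
  | succ n ih =>
    intro r x y
    constructor <;> ext <;> simp [(ih _ _ _).1, (ih _ _ _).2, smul_sub, smul_add]

instance : IsScalarTower ℝ (CD n) (CD n) := ⟨fun r x y => (smul_mul_and_mul_smul n r x y).1⟩

instance : SMulCommClass ℝ (CD n) (CD n) := ⟨fun r x y => ((smul_mul_and_mul_smul n r x y).2).symm⟩

theorem conj_mul (x y : CD n) : conj (x * y) = conj y * conj x := by
  induction n with
  | zero => exact mul_comm (show ℝ from x) y
  | succ n ih => ext <;> simp [ih]

theorem inner_comm (x y : CD n) : inner x y = inner y x := by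
  induction n with
  | zero => exact mul_comm (show ℝ from x) y
  | succ n ih => simp [ih]

@[simp] theorem inner_add_left (x y z : CD n) : inner (x + y) z = inner x z + inner y z := by
  induction n with
  | zero => exact add_mul (show ℝ from x) y z
  | succ n ih => simp only [inner_succ, fst_add, snd_add, ih]; ring

@[simp] theorem inner_smul_left (r : ℝ) (x y : CD n) : inner (r • x) y = r * inner x y := by
  induction n with
  | zero => exact mul_assoc r (show ℝ from x) y
  | succ n ih => simp only [inner_succ, fst_smul, snd_smul, ih]; ring

@[simp] lemma inner_add_right (x y z : CD n) : inner x (y + z) = inner x y + inner x z := by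
  rw [inner_comm, inner_add_left, inner_comm y, inner_comm z]

@[simp] lemma inner_smul_right (r : ℝ) (x y : CD n) : inner x (r • y) = r * inner x y := by
  rw [inner_comm, inner_smul_left, inner_comm y]

@[simp] lemma inner_zero_left (x : CD n) : inner 0 x = 0 := by
  simpa using inner_smul_left 0 (0 : CD n) x

@[simp] lemma inner_zero_right (x : CD n) : inner x 0 = 0 := by
  rw [inner_comm, inner_zero_left]

@[simp] lemma inner_neg_left (x y : CD n) : inner (-x) y = -inner x y := by
  rw [← neg_one_smul ℝ x, inner_smul_left, neg_one_mul]

@[simp] lemma inner_neg_right (x y : CD n) : inner x (-y) = -inner x y := by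
  rw [← neg_one_smul ℝ y, inner_smul_right, neg_one_mul]

@[simp] lemma inner_sub_left (x y z : CD n) : inner (x - y) z = inner x z - inner y z := by
  simp [sub_eq_add_neg]

@[simp] lemma inner_sub_right (x y z : CD n) : inner x (y - z) = inner x y - inner x z := by
  simp [sub_eq_add_neg]

@[simp] theorem inner_one_one : inner (1 : CD n) 1 = 1 := by
  induction n with
  | zero => exact mul_one (1 : ℝ)
  | succ n ih => simp [ih]

@[simp] theorem inner_conj_conj (x y : CD n) : inner (conj x) (conj y) = inner x y := by
  induction n with
  | zero => rfl
  | succ n ih => simp [ih]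

theorem inner_self_nonneg (x : CD n) : 0 ≤ inner x x := by
  induction n with
  | zero => exact mul_self_nonneg (show ℝ from x)
  | succ n ih => exact add_nonneg (ih x.1) (ih x.2)

theorem inner_self_eq_zero {x : CD n} : inner x x = 0 ↔ x = 0 := by
  induction n with
  | zero => exact mul_self_eq_zero
  | succ n ih =>
    rw [inner_succ, add_eq_zero_iff_of_nonneg (inner_self_nonneg _) (inner_self_nonneg _), ih, ih]
    exact ⟨fun h => ext h.1 h.2, fun h => ⟨congrArg Prod.fst h, congrArg Prod.snd h⟩⟩

lemma inner_mul_right_of_inner_mul_left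
    (h : ∀ x y z : CD n, inner (x * y) z = inner y (conj x * z)) (x y z : CD n) :
    inner (x * y) z = inner x (z * conj y) := by
  rw [← inner_conj_conj, conj_mul, h, conj_conj, ← inner_conj_conj, conj_conj, conj_mul, conj_conj]

theorem inner_mul_left (x y z : CD n) : inner (x * y) z = inner y (conj x * z) := by
  induction n with
  | zero => exact (mul_right_comm (show ℝ from x) y z).trans (mul_comm _ _)
  | succ n ih =>
    have ih' := inner_mul_right_of_inner_mul_left ih
    have e₁ : inner (conj y.2 * x.2) z.1 = inner y.2 (x.2 * conj z.1) := by
      rw [ih, conj_conj, inner_comm, ih']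
    have e₂ : inner (x.2 * conj y.1) z.2 = inner y.1 (conj z.2 * x.2) := by
      rw [ih', conj_conj, inner_comm, ih]
    simp only [inner_succ, fst_mul, snd_mul, fst_conj, snd_conj, inner_sub_left, inner_add_left,
      inner_add_right, inner_neg_right, mul_neg, neg_mul, sub_neg_eq_add, ih x.1, ih' y.2, e₁, e₂]
    ring

theorem inner_mul_right (x y z : CD n) : inner (x * y) z = inner x (z * conj y) :=
  inner_mul_right_of_inner_mul_left inner_mul_left x y z

theorem mul_conj_self (x : CD n) : x * conj x = inner x x • 1 := by
  induction n with
  | zero => exact (mul_one _).symm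
  | succ n ih =>
    have ih' (y : CD n) : conj y * y = inner y y • 1 := by simpa using ih (conj y)
    ext <;> simp [ih, ih', add_smul]

theorem add_conj (x : CD n) : x + conj x = (2 * inner x 1) • 1 := by
  induction n with
  | zero => exact (fun r : ℝ => by ring : ∀ r : ℝ, r + r = 2 * (r * 1) * 1) x
  | succ n ih => ext <;> simp [ih]

def normSq (x : CD n) : ℝ := inner x x

lemma norm_mul_eq_mul_norm_iff (x y : CD n) :
    norm (x * y) = norm x * norm y ↔ normSq (x * y) = normSq x * normSq y := by
  rw [norm, norm, norm, ← Real.sqrt_mul (inner_self_nonneg x)]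
  exact Real.sqrt_inj (inner_self_nonneg _) (mul_nonneg (inner_self_nonneg x) (inner_self_nonneg y))

@[simp] lemma normSq_conj (x : CD n) : normSq (conj x) = normSq x := inner_conj_conj x x

@[simp] lemma normSq_neg (x : CD n) : normSq (-x) = normSq x := by simp [normSq]

lemma eq_of_normSq_eq_of_inner_eq {u v : CD n} (h₁ : normSq u = normSq v)
    (h₂ : inner u v = normSq v) : u = v := by
  rw [← sub_eq_zero, ← inner_self_eq_zero]
  simp only [normSq, inner_sub_left, inner_sub_right, inner_comm v u] at *
  linarith

lemma eq_neg_smul_iff_of_inner_eq {u w c : CD n} {r : ℝ} (h : inner u w = -normSq c) :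
    u = -r • w ↔ normSq c = r * normSq w ∧ normSq u = r * normSq c := by
  constructor
  · rintro rfl
    have hc : normSq c = r * normSq w := by
      simp only [normSq, inner_smul_left] at h ⊢
      linarith
    refine ⟨hc, ?_⟩
    rw [hc]
    simp only [normSq, inner_smul_left, inner_smul_right]
    ring
  · rintro ⟨hc, hu⟩
    apply eq_of_normSq_eq_of_inner_eq
    · rw [hu, hc]
      simp only [normSq, inner_smul_left, inner_smul_right]
      ring
    · rw [inner_smul_right, h, hc]
      simp only [normSq, inner_smul_left, inner_smul_right]
      ring

lemma mul_self_eq (x : CD n) : x * x = (2 * inner x 1) • x - normSq x • 1 := by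
  have h := congrArg (x * ·) (add_conj x)
  simp only [mul_add, mul_conj_self, mul_smul_comm, mul_one] at h
  rw [normSq, ← h, add_sub_cancel_right]

theorem normSq_mul_self (x : CD n) : normSq (x * x) = normSq x * normSq x := by
  rw [mul_self_eq]
  simp only [normSq, inner_sub_left, inner_sub_right, inner_smul_left, inner_smul_right,
    inner_one_one, inner_comm 1 x]
  ring

lemma normSq_smul_sub_two_inner_smul (x y : CD n) :
    normSq (normSq x • y - (2 * inner x y) • x) = normSq x * normSq x * normSq y := by
  simp only [normSq, inner_sub_left, inner_sub_right, inner_smul_left, inner_smul_right,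
    inner_comm y x]
  ring

namespace IsPure

variable {a b : CD n}

lemma mul_self (ha : IsPure a) : a * a = -normSq a • 1 := by
  rw [neg_smul, normSq, ← mul_conj_self, ha, mul_neg, neg_neg]

lemma conj_mul (ha : IsPure a) (hb : IsPure b) : conj (a * b) = b * a := by
  rw [CD.conj_mul, ha, hb, neg_mul_neg]

lemma mul_add_mul_swap (ha : IsPure a) (hb : IsPure b) : a * b + b * a = (-2 * inner a b) • 1 := by
  rw [← ha.conj_mul hb, add_conj, inner_mul_left, ha, neg_mul, mul_one, inner_neg_right, inner_comm,
    mul_neg, neg_mul]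

lemma normSq_mul_comm (ha : IsPure a) (hb : IsPure b) : normSq (b * a) = normSq (a * b) := by
  rw [← ha.conj_mul hb, normSq_conj]

lemma assoc_self_left_eq_zero_iff (ha : IsPure a) :
    assoc a a b = 0 ↔ a * (a * b) = -normSq a • b := by
  rw [assoc, ha.mul_self, smul_mul_assoc, one_mul, sub_eq_zero, eq_comm]

lemma assoc_self_right_eq_zero_iff (hb : IsPure b) :
    assoc a b b = 0 ↔ a * b * b = -normSq b • a := by
  rw [assoc, hb.mul_self, mul_smul_comm, mul_one, sub_eq_zero]

lemma mul_mul_self_left_eq_iff (ha : IsPure a) :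
    a * (a * b) = -normSq a • b ↔
      normSq (a * b) = normSq a * normSq b ∧ normSq (a * (a * b)) = normSq a * normSq (a * b) := by
  refine eq_neg_smul_iff_of_inner_eq ?_
  rw [inner_mul_left, ha, neg_mul, inner_neg_right, inner_comm, normSq]

lemma mul_mul_self_right_eq_iff (hb : IsPure b) :
    a * b * b = -normSq b • a ↔
      normSq (a * b) = normSq a * normSq b ∧ normSq (a * b * b) = normSq (a * b) * normSq b := by
  refine (eq_neg_smul_iff_of_inner_eq (c := a * b) ?_).trans
    (by rw [mul_comm (normSq b), mul_comm (normSq b)])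
  rw [inner_mul_right, hb, mul_neg, inner_neg_right, normSq]

lemma normSq_mul_mul_self_left (ha : IsPure a) (hb : IsPure b) (h : a * (a * b) = -normSq a • b) :
    normSq (a * b * a) = normSq (a * b) * normSq a := by
  have hba : b * a = (-2 * inner a b) • 1 - a * b := eq_sub_of_add_eq' (ha.mul_add_mul_swap hb)
  calc normSq (a * b * a) = normSq (a * (b * a)) := by
        rw [← normSq_conj, CD.conj_mul, ha.conj_mul hb, ha, neg_mul, normSq_neg]
    _ = normSq (normSq a • b - (2 * inner a b) • a) := by
        rw [hba, mul_sub, mul_smul_comm, mul_one, h]; congr 1; module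
    _ = normSq (a * b) * normSq a := by
        rw [normSq_smul_sub_two_inner_smul, ((ha.mul_mul_self_left_eq_iff).1 h).1]; ring

lemma normSq_mul_mul_self_right (ha : IsPure a) (hb : IsPure b) (h : a * b * b = -normSq b • a) :
    normSq (b * (a * b)) = normSq b * normSq (a * b) := by
  have hba : b * a = (-2 * inner a b) • 1 - a * b := eq_sub_of_add_eq' (ha.mul_add_mul_swap hb)
  calc normSq (b * (a * b)) = normSq (b * a * b) := by
        rw [← normSq_conj, CD.conj_mul, ha.conj_mul hb, hb, mul_neg, normSq_neg]
    _ = normSq (normSq b • a - (2 * inner b a) • b) := by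
        rw [hba, sub_mul, smul_mul_assoc, one_mul, h, inner_comm]; congr 1; module
    _ = normSq b * normSq (a * b) := by
        rw [normSq_smul_sub_two_inner_smul, ((hb.mul_mul_self_right_eq_iff).1 h).1]; ring

end IsPure

end

end CD

theorem strongly_alternate_iff_normed_subset_general (n : ℕ) (a b : CD n)
    (ha : CD.IsPure a) (hb : CD.IsPure b) :
    (CD.assoc a a b = 0 ∧ CD.assoc a b b = 0) ↔
      ∀ x ∈ ({a, b, a * b} : Set (CD n)), ∀ y ∈ ({a, b, a * b} : Set (CD n)),
        CD.norm (x * y) = CD.norm x * CD.norm y := by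
  simp only [Set.mem_insert_iff, Set.mem_singleton_iff, forall_eq_or_imp, forall_eq,
    CD.norm_mul_eq_mul_norm_iff]
  rw [ha.assoc_self_left_eq_zero_iff, hb.assoc_self_right_eq_zero_iff]
  constructor
  · rintro ⟨hl, hr⟩
    obtain ⟨hab, haab⟩ := ha.mul_mul_self_left_eq_iff.1 hl
    have habb := (hb.mul_mul_self_right_eq_iff.1 hr).2
    exact ⟨⟨CD.normSq_mul_self a, hab, haab⟩,
      ⟨by rw [ha.normSq_mul_comm hb, hab, mul_comm], CD.normSq_mul_self b,
        ha.normSq_mul_mul_self_right hb hr⟩,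
      ⟨ha.normSq_mul_mul_self_left hb hl, habb, CD.normSq_mul_self (a * b)⟩⟩
  · rintro ⟨⟨-, hab, haab⟩, -, -, habb, -⟩
    exact ⟨ha.mul_mul_self_left_eq_iff.2 ⟨hab, haab⟩, hb.mul_mul_self_right_eq_iff.2 ⟨hab, habb⟩⟩

/-- For `n ≥ 4` and nonzero pure `a, b`, `(a,a,b) = 0 ∧ (a,b,b) = 0`
iff `{a, b, ab}` is a normed subset of `A n`. -/
theorem strongly_alternate_iff_normed_subset (n : ℕ) (hn : 4 ≤ n) (a b : CD n)
    (ha0 : a ≠ 0) (hb0 : b ≠ 0) (ha : CD.IsPure a) (hb : CD.IsPure b) :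
    (CD.assoc a a b = 0 ∧ CD.assoc a b b = 0) ↔
      ∀ x ∈ ({a, b, a * b} : Set (CD n)), ∀ y ∈ ({a, b, a * b} : Set (CD n)),
        CD.norm (x * y) = CD.norm x * CD.norm y :=
  strongly_alternate_iff_normed_subset_general n a b ha hb
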